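/- arXiv:0807.0905 — 2 statements merged into one kernel-verified Lean document; each statement's English description precedes it below -/
import Mathlib

section
/- Let $f_l(t) = \sum_{i=0}^l t^i$. For integers $n \geq 2$ and odd $p, q$ with $3 \leq p \leq q$, the polynomial $E(t) = (1+t) f_{2n-1} f_{p-1} f_{q-1} - t\,(f_{2n-2} f_{p-1} f_{q-1} + f_{2n-1} f_{p-2} f_{q-1} + f_{2n-1} f_{p-1} f_{q-2})$ is not equal to any polynomial all of whose coefficients lie in $\{-1, 0, 1\}$. -/
/-!
Multiplying by `(1 - t)³` clears the denominators of the geometric sums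
`f l = (1 - t ^ (l + 1)) / (1 - t)`. With `α = t ^ (2n - 1)`, `β = t ^ (p - 1)`, `γ = t ^ (q - 1)`
this gives `(1 - t)³ E = 1 - 2t + t² (α + β + γ - αβ - βγ - γα) + t³ (2 - t) αβγ`, which is
`1 - 2t` modulo `t⁴` because `t²` divides `α`, `β` and `γ`. Hence
`E ≡ (1 - 2t)(1 + 3t + 6t² + 10t³) ≡ 1 + t - 2t³ (mod t⁴)`, and the coefficient of `t³` is `-2`.
-/

open Polynomial

noncomputable def f (l : ℕ) : Polynomial ℤ := ∑ i ∈ Finset.range (l + 1), X ^ i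

section CommRing

variable {R : Type*} [CommRing R]

/-- The paper's `E(t)` is `alexanderForm X (f (2n-1)) (f (2n-2)) (f (p-1)) (f (p-2)) (f (q-1)) (f (q-2))`. -/
def alexanderForm (x u u' v v' w w' : R) : R :=
  (1 + x) * u * v * w - x * (u' * v * w + u * v' * w + u * v * w')

lemma one_sub_pow_three_mul_alexanderForm {x u u' v v' w w' α β γ : R}
    (hu : (1 - x) * u = 1 - x * α) (hu' : (1 - x) * u' = 1 - α)
    (hv : (1 - x) * v = 1 - x * β) (hv' : (1 - x) * v' = 1 - β)
    (hw : (1 - x) * w = 1 - x * γ) (hw' : (1 - x) * w' = 1 - γ) :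
    (1 - x) ^ 3 * alexanderForm x u u' v v' w w' =
      1 - 2 * x + (x ^ 2 * (α + β + γ - (α * β + β * γ + γ * α))
        + x ^ 3 * (2 - x) * (α * β * γ)) := by
  calc (1 - x) ^ 3 * alexanderForm x u u' v v' w w'
      = (1 + x) * ((1 - x) * u) * ((1 - x) * v) * ((1 - x) * w)
          - x * ((1 - x) * u' * ((1 - x) * v) * ((1 - x) * w)
            + (1 - x) * u * ((1 - x) * v') * ((1 - x) * w)
            + (1 - x) * u * ((1 - x) * v) * ((1 - x) * w')) := by
        unfold alexanderForm; ring
    _ = _ := by rw [hu, hu', hv, hv', hw, hw']; ring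

lemma pow_four_dvd_one_sub_pow_three_mul_alexanderForm_sub {x u u' v v' w w' α β γ : R}
    (hu : (1 - x) * u = 1 - x * α) (hu' : (1 - x) * u' = 1 - α)
    (hv : (1 - x) * v = 1 - x * β) (hv' : (1 - x) * v' = 1 - β)
    (hw : (1 - x) * w = 1 - x * γ) (hw' : (1 - x) * w' = 1 - γ)
    (hα : x ^ 2 ∣ α) (hβ : x ^ 2 ∣ β) (hγ : x ^ 2 ∣ γ) :
    x ^ 4 ∣ (1 - x) ^ 3 * alexanderForm x u u' v v' w w' - (1 - 2 * x) := by
  rw [one_sub_pow_three_mul_alexanderForm hu hu' hv hv' hw hw', add_sub_cancel_left]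
  obtain ⟨α, rfl⟩ := hα
  obtain ⟨β, rfl⟩ := hβ
  obtain ⟨γ, rfl⟩ := hγ
  exact ⟨α + β + γ - x ^ 2 * (α * β + β * γ + γ * α) + x ^ 5 * (2 - x) * (α * β * γ), by ring⟩

/-- `1 + 3x + 6x² + 10x³` inverts `(1 - x)³` modulo `x⁴`. -/
lemma pow_four_dvd_sub_of_pow_four_dvd_one_sub_pow_three_mul_sub {x e : R}
    (h : x ^ 4 ∣ (1 - x) ^ 3 * e - (1 - 2 * x)) : x ^ 4 ∣ e - (1 + x - 2 * x ^ 3) := by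
  obtain ⟨d, hd⟩ := h
  exact ⟨(1 + 3 * x + 6 * x ^ 2 + 10 * x ^ 3) * d + (15 - 24 * x + 10 * x ^ 2) * e - 20,
    by linear_combination (1 + 3 * x + 6 * x ^ 2 + 10 * x ^ 3) * hd⟩

end CommRing

lemma coeff_eq_of_X_pow_dvd_sub {R : Type*} [Ring R] {p q : R[X]} {k : ℕ}
    (h : X ^ (k + 1) ∣ p - q) : p.coeff k = q.coeff k := by
  rw [← sub_eq_zero, ← coeff_sub]
  exact X_pow_dvd_iff.mp h k k.lt_succ_self

lemma one_sub_X_mul_f (l : ℕ) : (1 - X) * f l = 1 - X ^ (l + 1) :=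
  mul_neg_geom_sum X (l + 1)

lemma one_sub_X_mul_f_succ (l : ℕ) : (1 - X) * f (l + 1) = 1 - X * X ^ (l + 1) := by
  rw [one_sub_X_mul_f, ← pow_succ']

lemma coeff_three_alexanderForm_f {a b c : ℕ} (ha : 1 ≤ a) (hb : 1 ≤ b) (hc : 1 ≤ c) :
    (alexanderForm X (f (a + 1)) (f a) (f (b + 1)) (f b) (f (c + 1)) (f c)).coeff 3 = -2 := by
  have hX {m : ℕ} (hm : 1 ≤ m) : (X : ℤ[X]) ^ 2 ∣ X ^ (m + 1) := pow_dvd_pow X (by omega)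
  have hdvd := pow_four_dvd_sub_of_pow_four_dvd_one_sub_pow_three_mul_sub
    (pow_four_dvd_one_sub_pow_three_mul_alexanderForm_sub
      (one_sub_X_mul_f_succ a) (one_sub_X_mul_f a) (one_sub_X_mul_f_succ b) (one_sub_X_mul_f b)
      (one_sub_X_mul_f_succ c) (one_sub_X_mul_f c) (hX ha) (hX hb) (hX hc))
  rw [coeff_eq_of_X_pow_dvd_sub hdvd]
  simp [coeff_X, coeff_one]

theorem stmt10_general (n p q : ℕ) (hn : 2 ≤ n)
    (hp3 : 3 ≤ p) (hpq : p ≤ q) :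
    ¬ (∀ k : ℕ, ((1 + X) * f (2 * n - 1) * f (p - 1) * f (q - 1)
        - X * (f (2 * n - 2) * f (p - 1) * f (q - 1)
          + f (2 * n - 1) * f (p - 2) * f (q - 1)
          + f (2 * n - 1) * f (p - 1) * f (q - 2))).coeff k
        ∈ ({-1, 0, 1} : Set ℤ)) := by
  intro h
  have hcoeff := coeff_three_alexanderForm_f (a := 2 * n - 2) (b := p - 2) (c := q - 2)
    (by omega) (by omega) (by omega)
  rw [show 2 * n - 2 + 1 = 2 * n - 1 by omega, show p - 2 + 1 = p - 1 by omega,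
    show q - 2 + 1 = q - 1 by omega] at hcoeff
  have h3 := h 3
  rw [← alexanderForm, hcoeff] at h3
  norm_num at h3

theorem stmt10 (n p q : ℕ) (hn : 2 ≤ n) (hp : Odd p) (hq : Odd q)
    (hp3 : 3 ≤ p) (hpq : p ≤ q) :
    ¬ (∀ k : ℕ, ((1 + X) * f (2 * n - 1) * f (p - 1) * f (q - 1)
        - X * (f (2 * n - 2) * f (p - 1) * f (q - 1)
          + f (2 * n - 1) * f (p - 2) * f (q - 1)
          + f (2 * n - 1) * f (p - 1) * f (q - 2))).coeff k
        ∈ ({-1, 0, 1} : Set ℤ)) :=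
  stmt10_general n p q hn hp3 hpq
end

section
/- Let $f_l(t) = \sum_{i=0}^l t^i$. For odd integers $p, q$ with $5 \leq p \leq q$, the polynomial $-t f_{p-1} f_{q-1} + (1+t) f_{p+q-1}$ has some coefficient equal to $-2$; in particular not all its coefficients lie in $\{-1, 0, 1\}$. -/
open Polynomial

lemma coeff_f (l k : ℕ) : (f l).coeff k = if k ≤ l then 1 else 0 := by
  simp [f, coeff_X_pow]

lemma coeff_f_mul_f_of_le {m n k : ℕ} (hm : k ≤ m) (hn : k ≤ n) :
    (f m * f n).coeff k = k + 1 := by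
  have hterm : ∀ x ∈ Finset.HasAntidiagonal.antidiagonal k,
      (f m).coeff x.1 * (f n).coeff x.2 = 1 := by
    intro x hx
    rw [Finset.HasAntidiagonal.mem_antidiagonal] at hx
    simp only [coeff_f, if_pos (show x.1 ≤ m by omega), if_pos (show x.2 ≤ n by omega), mul_one]
  rw [coeff_mul, Finset.sum_congr rfl hterm, Finset.sum_const, Finset.Nat.card_antidiagonal]
  simp

lemma coeff_succ_neg_X_mul_f_mul_f_add_of_le {m n k : ℕ} (hm : k ≤ m) (hn : k ≤ n) :
    (-(X * f m * f n) + (1 + X) * f (m + n + 1)).coeff (k + 1) = 1 - (k : ℤ) := by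
  rw [coeff_add, coeff_neg, mul_assoc, coeff_X_mul, coeff_f_mul_f_of_le hm hn, add_mul, one_mul,
    coeff_add, coeff_X_mul, coeff_f, coeff_f, if_pos (by omega), if_pos (by omega)]
  ring

theorem stmt11_general (p q : ℕ) (hp5 : 5 ≤ p) (hpq : p ≤ q) :
    (∃ k : ℕ, (-(X * f (p - 1) * f (q - 1)) + (1 + X) * f (p + q - 1)).coeff k = -2) ∧
    ¬ (∀ k : ℕ, (-(X * f (p - 1) * f (q - 1)) + (1 + X) * f (p + q - 1)).coeff k
        ∈ ({-1, 0, 1} : Set ℤ)) := by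
  have hdeg : p + q - 1 = (p - 1) + (q - 1) + 1 := by omega
  have h4 : (-(X * f (p - 1) * f (q - 1)) + (1 + X) * f (p + q - 1)).coeff 4 = -2 := by
    rw [hdeg, coeff_succ_neg_X_mul_f_mul_f_add_of_le (k := 3) (by omega) (by omega)]
    norm_num
  refine ⟨⟨4, h4⟩, fun hall => ?_⟩
  have h := hall 4
  rw [h4] at h
  norm_num at h

theorem stmt11 (p q : ℕ) (hp : Odd p) (hq : Odd q) (hp5 : 5 ≤ p) (hpq : p ≤ q) :
    (∃ k : ℕ, (-(X * f (p - 1) * f (q - 1)) + (1 + X) * f (p + q - 1)).coeff k = -2) ∧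
    ¬ (∀ k : ℕ, (-(X * f (p - 1) * f (q - 1)) + (1 + X) * f (p + q - 1)).coeff k
        ∈ ({-1, 0, 1} : Set ℤ)) :=
  stmt11_general p q hp5 hpq
end
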